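/- Let V be a finite vertex type and G a connected simple graph on V. Then the range of the boundary map ∂ : (E(G) → ZMod 2) →ₗ (V → ZMod 2) equals the subspace of functions g : V → ZMod 2 with Σ_{v ∈ V} g(v) = 0; in particular the range has dimension |V| − 1. -/

import Mathlib

/-!
Each edge has two endpoints, so every boundary has coordinate sum `0` in `ZMod 2`. Conversely,
along a walk from `a` to `b` the edge boundaries `δ_u - δ_w` telescope to `δ_a - δ_b`, and in a
connected graph the vectors `δ_v - δ_{v₀}` span the kernel of the coordinate sum. That kernel has
codimension one, the coordinate sum being a nonzero functional.
-/

open Finset in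
/-- The boundary map over `ZMod 2`: `(∂ f) v` is the sum of `f e` over edges `e` of `G`
incident to `v`. -/
def boundary (V : Type*) [Fintype V] [DecidableEq V]
    (G : SimpleGraph V) [DecidableRel G.Adj] :
    (G.edgeSet → ZMod 2) →ₗ[ZMod 2] (V → ZMod 2) where
  toFun f v := ∑ e : G.edgeSet, if v ∈ (e : Sym2 V) then f e else 0
  map_add' f g := by
    funext v
    simp only [Pi.add_apply]
    rw [← Finset.sum_add_distrib]
    congr 1; funext e
    split <;> simp
  map_smul' c f := by
    funext v
    simp only [Pi.smul_apply, smul_eq_mul, RingHom.id_apply]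
    rw [Finset.mul_sum]
    congr 1; funext e
    split <;> simp

open Finset

section CoordSum

variable (K V : Type*) [Fintype V]

def coordSum [Semiring K] : (V → K) →ₗ[K] K := ∑ v, LinearMap.proj v

variable {K V}

@[simp]
lemma coordSum_apply [Semiring K] (g : V → K) : coordSum K V g = ∑ v, g v := by
  simp [coordSum]

lemma eq_sum_smul_single_sub_single [Ring K] [DecidableEq V] {g : V → K} (hg : ∑ v, g v = 0) (v₀ : V) :
    g = ∑ v, g v • (Pi.single v 1 - Pi.single v₀ 1) := by
  simp only [smul_sub, sum_sub_distrib, ← sum_smul, hg, zero_smul, sub_zero]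
  exact pi_eq_sum_univ' g

lemma finrank_ker_coordSum_add_one [Field K] [DecidableEq V] [Nonempty V] :
    Module.finrank K (LinearMap.ker (coordSum K V)) + 1 = Fintype.card V := by
  inhabit V
  have hne : coordSum K V ≠ 0 := fun h => by
    simpa using LinearMap.congr_fun h (Pi.single default 1)
  rw [Module.Dual.finrank_ker_add_one_of_ne_zero hne, Module.finrank_fintype_fun_eq_card]

end CoordSum

section Boundary

variable {V : Type*} [Fintype V] [DecidableEq V] {G : SimpleGraph V} [DecidableRel G.Adj]

lemma boundary_apply (f : G.edgeSet → ZMod 2) (v : V) :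
    boundary V G f v = ∑ e : G.edgeSet, if v ∈ (e : Sym2 V) then f e else 0 :=
  rfl

lemma sum_boundary_apply (f : G.edgeSet → ZMod 2) : ∑ v, boundary V G f v = 0 := by
  simp_rw [boundary_apply]
  rw [sum_comm]
  refine sum_eq_zero fun e _ => ?_
  have hcard : #{v | v ∈ (e : Sym2 V)} = 2 := by
    rw [← Sym2.card_toFinset_of_not_isDiag _ (G.not_isDiag_of_mem_edgeSet e.2)]
    congr 1; ext; simp
  rw [← sum_filter, sum_const, hcard, two_nsmul, CharTwo.add_self_eq_zero]

lemma boundary_single_edge {a b : V} (h : G.Adj a b) :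
    boundary V G (Pi.single ⟨s(a, b), h⟩ 1) = Pi.single a 1 - Pi.single b 1 := by
  ext v
  rw [boundary_apply, sum_eq_single ⟨s(a, b), h⟩ (fun e _ he => by simp [he]) (by simp), Pi.sub_apply,
    CharTwo.sub_eq_add]
  rcases eq_or_ne v a with rfl | hva
  · simp [h.ne]
  · rcases eq_or_ne v b with rfl | hvb <;> simp [*]

lemma single_sub_single_mem_range_boundary {a b : V} (h : G.Reachable a b) :
    Pi.single a 1 - Pi.single b 1 ∈ LinearMap.range (boundary V G) := by
  obtain ⟨w⟩ := h
  induction w with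
  | nil => simp
  | cons hadj _ ih =>
    rw [← sub_add_sub_cancel]
    exact add_mem ⟨_, boundary_single_edge hadj⟩ ih

lemma range_boundary_eq_ker_coordSum (hG : G.Connected) :
    LinearMap.range (boundary V G) = LinearMap.ker (coordSum (ZMod 2) V) := by
  refine le_antisymm (LinearMap.range_le_ker_iff.mpr ?_) fun g hg => ?_
  · ext f
    simp [sum_boundary_apply]
  · obtain ⟨v₀⟩ := hG.nonempty
    rw [LinearMap.mem_ker, coordSum_apply] at hg
    rw [eq_sum_smul_single_sub_single hg v₀]
    exact sum_mem fun v _ => Submodule.smul_mem _ _ (single_sub_single_mem_range_boundary (hG v v₀))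

end Boundary

/-- For a connected simple graph `G` on a finite vertex type `V`, the range of
the boundary map over `ZMod 2` is exactly the set of functions `g : V → ZMod 2` with
`∑ v, g v = 0`; in particular the range has dimension `|V| - 1`. -/
theorem stmt_6 {V : Type*} [Fintype V] [DecidableEq V]
    (G : SimpleGraph V) [DecidableRel G.Adj] (hG : G.Connected) :
    (∀ g : V → ZMod 2, g ∈ LinearMap.range (boundary V G) ↔ ∑ v : V, g v = 0) ∧
      (Module.finrank (ZMod 2) ↥(LinearMap.range (boundary V G)) : ℤ) =
        (Fintype.card V : ℤ) - 1 := by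
  have := hG.nonempty
  rw [range_boundary_eq_ker_coordSum hG]
  refine ⟨fun g => by rw [LinearMap.mem_ker, coordSum_apply], ?_⟩
  rw [← finrank_ker_coordSum_add_one (K := ZMod 2)]
  push_cast
  ring
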